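/- For every β > −1, every k ≥ 1, and every λ ∈ (0,1], the filter function g_k(λ) = (1 − r_k(λ))/λ of the Nesterov iteration satisfies |g_k(λ)| ≤ (k+1)/2 + (k−1)². -/

import Mathlib

/-!
For `0 < l ≤ 1` the recursion `z = (1 - l) (y + α (y - x))` with `|α| ≤ 1` does not increase the
energy `l y² + (1 - l) (y - x)²`, which equals `l (1 - l)` at the start; hence `|r_k| ≤ 1`. Since
`r_k - r_{k+1} = l r_k - (1 - l) α_k (r_{k-1} - r_k)` and `α_1 = 0`, the increments then satisfy
`|r_k - r_{k+1}| ≤ k l` for `k ≥ 1`, and telescoping gives `|1 - r_k| ≤ l (1 + k (k - 1) / 2)`,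
i.e. `|g_k| ≤ (k + 1) / 2 + (k - 1)² / 2`.
-/

/-- Momentum sequence `α_k = (k-1)/(k+β)`. -/
noncomputable def nesterovAlpha (β : ℝ) (k : ℕ) : ℝ := ((k : ℝ) - 1) / ((k : ℝ) + β)

/-- Residual polynomials of Nesterov's accelerated Landweber iteration. -/
noncomputable def nesterovRes (β : ℝ) : ℕ → ℝ → ℝ
  | 0, _ => 1
  | 1, l => 1 - l
  | (k + 2), l =>
      (1 - l) * (nesterovRes β (k + 1) l +
        nesterovAlpha β (k + 1) * (nesterovRes β (k + 1) l - nesterovRes β k l))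

noncomputable def nesterovEnergy (l x y : ℝ) : ℝ := l * y ^ 2 + (1 - l) * (y - x) ^ 2

section MomentumStep

variable {l a x y : ℝ}

lemma nesterovEnergy_momentum_le (hl0 : 0 ≤ l) (hl1 : l ≤ 1) (ha : |a| ≤ 1) :
    nesterovEnergy l y ((1 - l) * (y + a * (y - x))) ≤ nesterovEnergy l x y := by
  have ha2 : a ^ 2 ≤ 1 := (sq_le_one_iff_abs_le_one a).2 ha
  have hcontract : a ^ 2 * (1 - l) ≤ 1 := by nlinarith
  have hid : nesterovEnergy l y ((1 - l) * (y + a * (y - x)))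
      = (1 - l) * (l * y ^ 2 + a ^ 2 * (1 - l) * (y - x) ^ 2) := by
    unfold nesterovEnergy; ring
  rw [hid, nesterovEnergy]
  nlinarith [mul_nonneg hl0 (sq_nonneg y), mul_nonneg (sub_nonneg.2 hl1) (sq_nonneg (y - x)),
    mul_le_mul_of_nonneg_right hcontract (mul_nonneg (sub_nonneg.2 hl1) (sq_nonneg (y - x)))]

lemma abs_sub_momentum_le (hl0 : 0 ≤ l) (hl1 : l ≤ 1) :
    |y - (1 - l) * (y + a * (y - x))| ≤ l * |y| + |a| * |y - x| := by
  have hid : y - (1 - l) * (y + a * (y - x)) = l * y - (1 - l) * (a * (y - x)) := by ring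
  calc |y - (1 - l) * (y + a * (y - x))|
      ≤ |l * y| + |(1 - l) * (a * (y - x))| := by rw [hid]; exact abs_sub _ _
    _ = l * |y| + (1 - l) * (|a| * |y - x|) := by
      rw [abs_mul, abs_mul, abs_mul, abs_of_nonneg hl0, abs_of_nonneg (sub_nonneg.2 hl1)]
    _ ≤ l * |y| + |a| * |y - x| := by
      have : 1 - l ≤ 1 := by linarith
      exact add_le_add le_rfl (mul_le_of_le_one_left (by positivity) this)

end MomentumStep

lemma nesterovAlpha_one (β : ℝ) : nesterovAlpha β 1 = 0 := by
  simp [nesterovAlpha]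

lemma abs_nesterovAlpha_le_one {β : ℝ} (hβ : -1 < β) {k : ℕ} (hk : 1 ≤ k) :
    |nesterovAlpha β k| ≤ 1 := by
  have hk1 : (1 : ℝ) ≤ k := by exact_mod_cast hk
  rw [nesterovAlpha, abs_div, abs_of_nonneg (by linarith), abs_of_pos (by linarith),
    div_le_one (by linarith)]
  linarith

lemma nesterovRes_add_two (β l : ℝ) (k : ℕ) :
    nesterovRes β (k + 2) l = (1 - l) * (nesterovRes β (k + 1) l +
      nesterovAlpha β (k + 1) * (nesterovRes β (k + 1) l - nesterovRes β k l)) :=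
  rfl

section Residuals

variable {β l : ℝ} (hβ : -1 < β) (hl0 : 0 < l) (hl1 : l ≤ 1)
include hβ hl0 hl1

lemma nesterovEnergy_nesterovRes_le (k : ℕ) :
    nesterovEnergy l (nesterovRes β k l) (nesterovRes β (k + 1) l) ≤ l * (1 - l) := by
  induction k with
  | zero => simp only [nesterovEnergy, nesterovRes]; nlinarith
  | succ k ih =>
    rw [nesterovRes_add_two]
    exact (nesterovEnergy_momentum_le hl0.le hl1 (abs_nesterovAlpha_le_one hβ (by omega))).trans ih

lemma abs_nesterovRes_le_one (k : ℕ) : |nesterovRes β k l| ≤ 1 := by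
  cases k with
  | zero => simp [nesterovRes]
  | succ k =>
    have hE := nesterovEnergy_nesterovRes_le hβ hl0 hl1 k
    rw [nesterovEnergy] at hE
    rw [← sq_le_one_iff_abs_le_one]
    nlinarith [mul_nonneg (sub_nonneg.2 hl1) (sq_nonneg (nesterovRes β (k + 1) l -
      nesterovRes β k l))]

lemma abs_nesterovRes_sub_succ_le (k : ℕ) :
    |nesterovRes β (k + 1) l - nesterovRes β (k + 2) l| ≤ (k + 1) * l := by
  have hstep (k : ℕ) : |nesterovRes β (k + 1) l - nesterovRes β (k + 2) l|
      ≤ l + |nesterovAlpha β (k + 1)| * |nesterovRes β (k + 1) l - nesterovRes β k l| := by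
    rw [nesterovRes_add_two]
    refine (abs_sub_momentum_le hl0.le hl1).trans ?_
    gcongr
    exact mul_le_of_le_one_right hl0.le (abs_nesterovRes_le_one hβ hl0 hl1 _)
  induction k with
  | zero =>
    simpa only [nesterovAlpha_one, abs_zero, zero_mul, add_zero, Nat.cast_zero, zero_add,
      one_mul] using hstep 0
  | succ k ih =>
    calc |nesterovRes β (k + 2) l - nesterovRes β (k + 3) l|
        ≤ l + |nesterovAlpha β (k + 2)| * |nesterovRes β (k + 2) l - nesterovRes β (k + 1) l| :=
          hstep (k + 1)
      _ ≤ l + 1 * ((k + 1) * l) := by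
        gcongr
        · exact abs_nesterovAlpha_le_one hβ (by omega)
        · rw [abs_sub_comm]; exact ih
      _ = ((k + 1 : ℕ) + 1) * l := by push_cast; ring

lemma abs_one_sub_nesterovRes_le (k : ℕ) :
    |1 - nesterovRes β (k + 1) l| ≤ l * (1 + k * (k + 1) / 2) := by
  induction k with
  | zero => simp [nesterovRes, abs_of_pos hl0]
  | succ k ih =>
    calc |1 - nesterovRes β (k + 2) l|
        ≤ |1 - nesterovRes β (k + 1) l| + |nesterovRes β (k + 1) l - nesterovRes β (k + 2) l| :=
          abs_sub_le _ _ _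
      _ ≤ l * (1 + k * (k + 1) / 2) + (k + 1) * l :=
          add_le_add ih (abs_nesterovRes_sub_succ_le hβ hl0 hl1 k)
      _ = l * (1 + ((k + 1 : ℕ) : ℝ) * ((k + 1 : ℕ) + 1) / 2) := by push_cast; ring

end Residuals

theorem nesterov_filter_bound_general (β : ℝ) (hβ : -1 < β) (k : ℕ)
    (l : ℝ) (hl : l ∈ Set.Ioc (0 : ℝ) 1) :
    |(1 - nesterovRes β k l) / l| ≤ ((k : ℝ) + 1) / 2 + ((k : ℝ) - 1) ^ 2 := by
  obtain ⟨hl0, hl1⟩ := hl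
  rw [abs_div, abs_of_pos hl0, div_le_iff₀ hl0]
  cases k with
  | zero => simp only [nesterovRes, sub_self, abs_zero]; positivity
  | succ n =>
    calc |1 - nesterovRes β (n + 1) l| ≤ l * (1 + n * (n + 1) / 2) :=
          abs_one_sub_nesterovRes_le hβ hl0 hl1 n
      _ ≤ ((((n + 1 : ℕ) : ℝ) + 1) / 2 + (((n + 1 : ℕ) : ℝ) - 1) ^ 2) * l := by
        push_cast
        nlinarith [mul_nonneg hl0.le (sq_nonneg (n : ℝ))]

theorem nesterov_filter_bound (β : ℝ) (hβ : -1 < β) (k : ℕ) (hk : 1 ≤ k)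
    (l : ℝ) (hl : l ∈ Set.Ioc (0 : ℝ) 1) :
    |(1 - nesterovRes β k l) / l| ≤ ((k : ℝ) + 1) / 2 + ((k : ℝ) - 1) ^ 2 :=
  nesterov_filter_bound_general β hβ k l hl
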